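/- For every integer $n \ge 2$: $\sum_{k=0}^{n} (4k-1)^3 \frac{(-\frac{1}{2})_k^2\,(-n)_k\,(n-1)_k}{(1)_k^2\,(n+\frac{1}{2})_k\,(\frac{3}{2}-n)_k} = 0$. -/

import Mathlib

open Finset

/-- Pochhammer symbol `(a)_k = a(a+1)⋯(a+k-1)` for a rational `a`. -/
def poch (a : ℚ) (k : ℕ) : ℚ := ∏ i ∈ Finset.range k, (a + i)

/-- Euler numbers, defined by `∑ E_n x^n/n! = 2e^x/(e^{2x}+1) = sech x`. -/
def eulerNumber : ℕ → ℤ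
  | 0 => 1
  | n + 1 =>
    -∑ k ∈ (Finset.range (n + 1)).attach,
      if Even (n + 1 - k.1) then ((n + 1).choose k.1 : ℤ) * eulerNumber k.1 else 0
  decreasing_by exact Finset.mem_range.mp k.2

/-- `x ≡ y (mod p^m)` for rationals: `v_p(x - y) ≥ m` (with `x = y` allowed). -/
def ratCongr (p m : ℕ) (x y : ℚ) : Prop :=
  x = y ∨ (m : ℤ) ≤ padicValRat p (x - y)

/-! The summand is Gosper-summable: by induction on `m`, the partial sum up to `m` equals
`partialSumCert n m / (n²(n-1)²)` times the hypergeometric term `sumNum n m / sumDen n m`,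
and the certificate has the factor `n - m`, so the full sum vanishes. -/

def sumNum (n : ℚ) (k : ℕ) : ℚ := poch (-(1/2)) k ^ 2 * poch (-n) k * poch (n - 1) k

def sumDen (n : ℚ) (k : ℕ) : ℚ := (k.factorial : ℚ) ^ 2 * poch (n + 1/2) k * poch (3/2 - n) k

def summand (n : ℚ) (k : ℕ) : ℚ := (4 * k - 1) ^ 3 * sumNum n k / sumDen n k

lemma poch_succ (a : ℚ) (k : ℕ) : poch a (k + 1) = poch a k * (a + k) :=
  prod_range_succ _ _

lemma poch_int_add_half_ne_zero (z : ℤ) (k : ℕ) : poch (z + 1/2) k ≠ 0 := by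
  refine prod_ne_zero_iff.mpr fun i _ h => ?_
  have h' : ((2 * (z + i) + 1 : ℤ) : ℚ) = 0 := by push_cast; linarith
  have : 2 * (z + i) + 1 = 0 := by exact_mod_cast h'
  omega

lemma sumDen_natCast_ne_zero (n k : ℕ) : sumDen n k ≠ 0 := by
  have hA := poch_int_add_half_ne_zero n k
  have hB := poch_int_add_half_ne_zero (1 - n) k
  push_cast at hA hB
  rw [show (1 - n + 1/2 : ℚ) = 3/2 - n by ring] at hB
  exact mul_ne_zero (mul_ne_zero (pow_ne_zero _ (by exact_mod_cast k.factorial_ne_zero)) hA) hB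

lemma sumNum_succ (n : ℚ) (k : ℕ) :
    sumNum n (k + 1) = sumNum n k * ((k - 1/2) ^ 2 * (k - n) * (n - 1 + k)) := by
  simp only [sumNum, poch_succ]
  ring

lemma sumDen_succ (n : ℚ) (k : ℕ) :
    sumDen n (k + 1) = sumDen n k * ((k + 1) ^ 2 * (n + 1/2 + k) * (3/2 - n + k)) := by
  simp only [sumDen, poch_succ, Nat.factorial_succ]
  push_cast
  ring

-- Found by Gosper's algorithm.
def partialSumCert (n m : ℚ) : ℚ :=
  (n - m) * (2 * m - 1) ^ 2 * (n + m - 1) * ((n ^ 2 - n) * (16 * m ^ 2 + 8 * m - 1) + 2 * m ^ 2 + m)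

lemma partialSumCert_self (n : ℚ) : partialSumCert n n = 0 := by
  simp [partialSumCert]

lemma sum_summand_mul_sumDen (n : ℚ) (hden : ∀ k, sumDen n k ≠ 0) (m : ℕ) :
    n ^ 2 * (n - 1) ^ 2 * (∑ k ∈ range (m + 1), summand n k) * sumDen n m =
      partialSumCert n m * sumNum n m := by
  induction m with
  | zero =>
    norm_num [summand, sumNum, sumDen, poch, partialSumCert]
    ring
  | succ m ih =>
    have hlast : summand n (m + 1) * sumDen n (m + 1) =
        (4 * (m + 1 : ℕ) - 1) ^ 3 * sumNum n (m + 1) :=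
      div_mul_cancel₀ _ (hden (m + 1))
    rw [sumNum_succ, sumDen_succ] at hlast ⊢
    rw [sum_range_succ]
    simp only [partialSumCert] at ih ⊢
    push_cast at hlast ⊢
    linear_combination
      ((m + 1) ^ 2 * (n + 1/2 + m) * (3/2 - n + m)) * ih + n ^ 2 * (n - 1) ^ 2 * hlast

theorem stmt12 (n : ℕ) (hn : 2 ≤ n) :
    ∑ k ∈ Finset.range (n + 1),
      (4 * k - 1 : ℚ) ^ 3 * (poch (-(1/2)) k ^ 2 * poch (-(n : ℚ)) k * poch ((n : ℚ) - 1) k) /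
        ((k.factorial : ℚ) ^ 2 * poch ((n : ℚ) + 1/2) k * poch (3/2 - (n : ℚ)) k) = 0 := by
  have h := sum_summand_mul_sumDen n (sumDen_natCast_ne_zero n) n
  rw [partialSumCert_self, zero_mul] at h
  have hn' : (2 : ℚ) ≤ n := by exact_mod_cast hn
  have hc : (n : ℚ) ^ 2 * (n - 1) ^ 2 ≠ 0 := by
    apply mul_ne_zero <;> apply pow_ne_zero <;> linarith
  exact (mul_eq_zero.mp ((mul_eq_zero.mp h).resolve_right (sumDen_natCast_ne_zero n n))).resolve_left
    hc
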